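/- Let B be a bicategory having pseudo pullbacks of all cospans with both legs in W, where W satisfies [WB1]–[WB5], is pullback closed (for every pseudo pullback square of u, v ∈ W with projections ū, v̄, the composite u∘v̄ is again in W), and consists of co-full arrows. Then every 2-cell of B(W⁻¹) between spans (v, f) and (v′, f′) admits a representative whose left-hand invertible 2-cell is the chosen pseudo pullback square of the cospan (v, v′). -/

import Mathlib

open CategoryTheory Bicategory

universe w v u

/-- A class of 1-morphisms in a bicategory. -/
def WClass (B : Type u) [Bicategory.{w, v} B] :=
  ∀ ⦃a b : B⦄, (a ⟶ b) → Prop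

namespace WClass

variable {B : Type u} [Bicategory.{w, v} B]

/-- [WB1]: all identities are in `W`. -/
def WB1 (W : WClass B) : Prop := ∀ a : B, W (𝟙 a)

/-- [WB2]: for composable arrows of `W` there is a pre-composition landing in `W`. -/
def WB2 (W : WClass B) : Prop :=
  ∀ ⦃a b c : B⦄ (vm : a ⟶ b) (wm : b ⟶ c), W vm → W wm →
    ∃ (a' : B) (u : a' ⟶ a), W (u ≫ vm ≫ wm)

/-- [WB3]: squares with invertible fillers over cospans with one leg in `W`. -/
def WB3 (W : WClass B) : Prop :=
  ∀ ⦃a b c : B⦄ (wm : a ⟶ b) (f : c ⟶ b), W wm →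
    ∃ (d : B) (h : d ⟶ a) (vm : d ⟶ c), W vm ∧ Nonempty (h ≫ wm ≅ vm ≫ f)

/-- `β` is a lifting of the 2-cell `η : f ≫ wm ⟶ g ≫ wm` along `wm`, via `u`. -/
def IsLift ⦃a b c : B⦄ (f g : a ⟶ b) (wm : b ⟶ c) (η : f ≫ wm ⟶ g ≫ wm)
    ⦃a' : B⦄ (u : a' ⟶ a) (β : u ≫ f ⟶ u ≫ g) : Prop :=
  β ▷ wm = (α_ u f wm).hom ≫ u ◁ η ≫ (α_ u g wm).inv

/-- [WB4]: existence of liftings of 2-cells along arrows of `W`, together with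
the compatibility of any two such liftings. -/
def WB4 (W : WClass B) : Prop :=
  (∀ ⦃a b c : B⦄ (f g : a ⟶ b) (wm : b ⟶ c), W wm → ∀ η : f ≫ wm ⟶ g ≫ wm,
    ∃ (a' : B) (u : a' ⟶ a), W u ∧ ∃ β : u ≫ f ⟶ u ≫ g, IsLift f g wm η u β) ∧
  (∀ ⦃a b c : B⦄ (f g : a ⟶ b) (wm : b ⟶ c), W wm → ∀ η : f ≫ wm ⟶ g ≫ wm,
    ∀ ⦃a₁ : B⦄ (u₁ : a₁ ⟶ a) (β₁ : u₁ ≫ f ⟶ u₁ ≫ g), W u₁ → IsLift f g wm η u₁ β₁ →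
      ∀ ⦃a₂ : B⦄ (u₂ : a₂ ⟶ a) (β₂ : u₂ ≫ f ⟶ u₂ ≫ g), W u₂ → IsLift f g wm η u₂ β₂ →
        ∃ (d : B) (s : d ⟶ a₁) (t : d ⟶ a₂), W (s ≫ u₁) ∧ W (t ≫ u₂) ∧
          ∃ ε' : s ≫ u₁ ≅ t ≫ u₂,
            ((α_ s u₁ f).hom ≫ s ◁ β₁ ≫ (α_ s u₁ g).inv) ≫ ε'.hom ▷ g =
              ε'.hom ▷ f ≫ (α_ t u₂ f).hom ≫ t ◁ β₂ ≫ (α_ t u₂ g).inv)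

/-- [WB5]: `W` is closed under invertible 2-cells. -/
def WB5 (W : WClass B) : Prop :=
  ∀ ⦃a b : B⦄ (vm wm : a ⟶ b), W wm → Nonempty (vm ≅ wm) → W vm

end WClass

/-- A 1-morphism `wm` is co-fully-faithful if every 2-cell `wm ≫ f ⟶ wm ≫ g`
factors uniquely through right whiskering by `wm`. -/
def CoFF {B : Type u} [Bicategory.{w, v} B] ⦃a b : B⦄ (wm : a ⟶ b) : Prop :=
  ∀ ⦃c : B⦄ (f g : b ⟶ c) (η : wm ≫ f ⟶ wm ≫ g), ∃! η' : f ⟶ g, wm ◁ η' = η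

/-- A 1-morphism `wm` is co-full if every 2-cell `wm ≫ f ⟶ wm ≫ g`
factors (not necessarily uniquely) through right whiskering by `wm`. -/
def CoFull {B : Type u} [Bicategory.{w, v} B] ⦃a b : B⦄ (wm : a ⟶ b) : Prop :=
  ∀ ⦃c : B⦄ (f g : b ⟶ c) (η : wm ≫ f ⟶ wm ≫ g), ∃ η' : f ⟶ g, wm ◁ η' = η

/-- Equivalence of 2-cell diagrams between the spans `(u₁, f₁)` and `(u₂, f₂)` in the
construction of the bicategory of fractions: the diagram `(v₁, v₂, αc, β)` is equivalent
to the diagram `(v₁', v₂', αc', β')` when there is a common refinement `s, t` with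
invertible comparison 2-cells `ε₁, ε₂`, the relevant composite in `W`, satisfying the
two pasting equations. -/
def DiagEquiv {B : Type u} [Bicategory.{w, v} B] (W : WClass B)
    {a b c₁ c₂ : B} (u₁ : c₁ ⟶ a) (f₁ : c₁ ⟶ b) (u₂ : c₂ ⟶ a) (f₂ : c₂ ⟶ b)
    {d : B} (v₁ : d ⟶ c₁) (v₂ : d ⟶ c₂)
    (αc : v₁ ≫ u₁ ≅ v₂ ≫ u₂) (β : v₁ ≫ f₁ ⟶ v₂ ≫ f₂)
    {d' : B} (v₁' : d' ⟶ c₁) (v₂' : d' ⟶ c₂)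
    (αc' : v₁' ≫ u₁ ≅ v₂' ≫ u₂) (β' : v₁' ≫ f₁ ⟶ v₂' ≫ f₂) : Prop :=
  ∃ (e : B) (s : e ⟶ d) (t : e ⟶ d'),
    W ((s ≫ v₁) ≫ u₁) ∧
    ∃ (ε₁ : s ≫ v₁ ≅ t ≫ v₁') (ε₂ : s ≫ v₂ ≅ t ≫ v₂'),
      (ε₁.hom ▷ u₁ ≫ (α_ t v₁' u₁).hom ≫ t ◁ αc'.hom ≫ (α_ t v₂' u₂).inv =
        (α_ s v₁ u₁).hom ≫ s ◁ αc.hom ≫ (α_ s v₂ u₂).inv ≫ ε₂.hom ▷ u₂) ∧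
      (ε₁.hom ▷ f₁ ≫ (α_ t v₁' f₁).hom ≫ t ◁ β' ≫ (α_ t v₂' f₂).inv =
        (α_ s v₁ f₁).hom ≫ s ◁ β ≫ (α_ s v₂ f₂).inv ≫ ε₂.hom ▷ f₂)

/-- Data of a pseudo pullback of a cospan `u : a ⟶ c ⟵ b : vm` in a bicategory:
an apex with projections, an invertible filler 2-cell, and a lifting universal
property compatible with the fillers. -/
structure PseudoPullbackData {B : Type u} [Bicategory.{w, v} B] {a b c : B}
    (u : a ⟶ c) (vm : b ⟶ c) where
  pt : B
  fst : pt ⟶ a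
  snd : pt ⟶ b
  iso : fst ≫ u ≅ snd ≫ vm
  lift : ∀ {x : B} (p : x ⟶ a) (q : x ⟶ b), (p ≫ u ≅ q ≫ vm) → (x ⟶ pt)
  liftFst : ∀ {x : B} (p : x ⟶ a) (q : x ⟶ b) (e : p ≫ u ≅ q ≫ vm),
    lift p q e ≫ fst ≅ p
  liftSnd : ∀ {x : B} (p : x ⟶ a) (q : x ⟶ b) (e : p ≫ u ≅ q ≫ vm),
    lift p q e ≫ snd ≅ q
  lift_w : ∀ {x : B} (p : x ⟶ a) (q : x ⟶ b) (e : p ≫ u ≅ q ≫ vm),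
    (α_ (lift p q e) fst u).hom ≫ lift p q e ◁ iso.hom ≫
        (α_ (lift p q e) snd vm).inv ≫ (liftSnd p q e).hom ▷ vm =
      (liftFst p q e).hom ▷ u ≫ e.hom

/-!
The universal property of the pseudo pullback `P` of `(u₁, u₂)` turns `(v₁, v₂, αc)` into a
1-cell `t : d ⟶ P` with `t ≫ fst ≅ v₁`, `t ≫ snd ≅ v₂`, compatibly with the fillers; this
matches the left-hand cells. For the right-hand cell, `β` has to be divided by `t`. Both
`t ≫ fst ≫ u₁ ≅ v₁ ≫ u₁` and `fst ≫ u₁` lie in `W` (pullback closedness), so [WB3] yields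
`h` and `m ∈ W` with `h ≫ t ≫ fst ≫ u₁ ≅ m ≫ fst ≫ u₁`; lifting this invertible 2-cell along
`fst ≫ u₁` with [WB4] gives `n ∈ W` with `n ≫ h ≫ t ≅ n ≫ m`. The latter is a composite of
co-full arrows, so the whiskered `β` descends along `n ≫ h ≫ t` to the required `δ`. A last
refinement by [WB2] and [WB3] puts the comparison 1-cell into `W`.
-/

section

variable {B : Type u} [Bicategory.{w, v} B]

namespace WClass

section IsLift

variable {a b c : B} {f g k : a ⟶ b} {wm : b ⟶ c}

lemma isLift_id (f : a ⟶ b) (wm : b ⟶ c) :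
    IsLift f f wm (𝟙 (f ≫ wm)) (𝟙 a) (𝟙 (𝟙 a ≫ f)) := by
  simp [IsLift]

lemma IsLift.comp {η : f ≫ wm ⟶ g ≫ wm} {η' : g ≫ wm ⟶ k ≫ wm} {a' : B}
    {u : a' ⟶ a} {β : u ≫ f ⟶ u ≫ g} {β' : u ≫ g ⟶ u ≫ k}
    (h : IsLift f g wm η u β) (h' : IsLift g k wm η' u β') :
    IsLift f k wm (η ≫ η') u (β ≫ β') := by
  unfold IsLift at *
  rw [comp_whiskerRight, h, h']
  simp

lemma IsLift.whiskerLeft {η : f ≫ wm ⟶ g ≫ wm} {a' : B} {u : a' ⟶ a}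
    {β : u ≫ f ⟶ u ≫ g} (h : IsLift f g wm η u β) {a'' : B} (m : a'' ⟶ a') :
    IsLift f g wm η (m ≫ u) ((α_ m u f).hom ≫ m ◁ β ≫ (α_ m u g).inv) := by
  unfold IsLift at *
  rw [comp_whiskerRight, comp_whiskerRight, whisker_assoc, h]
  simp only [Bicategory.whiskerLeft_comp]
  bicategory

lemma IsLift.ofIso {η : f ≫ wm ⟶ g ≫ wm} {a' : B} {u u' : a' ⟶ a}
    {β : u ≫ f ⟶ u ≫ g} (h : IsLift f g wm η u β) (ψ : u ≅ u') :
    IsLift f g wm η u' (ψ.inv ▷ f ≫ β ≫ ψ.hom ▷ g) := by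
  unfold IsLift at *
  rw [comp_whiskerRight, comp_whiskerRight, h]
  simp only [Category.assoc]
  rw [associator_naturality_left_assoc, ← whisker_exchange_assoc]
  simp

end IsLift

variable {W : WClass B}

lemma exists_comp_comp_comp_mem (h2 : W.WB2) (h3 : W.WB3) (h5 : W.WB5) {x y z t : B}
    {w₁ : x ⟶ y} {w₂ : y ⟶ z} {w₃ : z ⟶ t} (hw₁ : W w₁) (hw₂ : W w₂) (hw₃ : W w₃) :
    ∃ (e : B) (n : e ⟶ x), W (n ≫ w₁ ≫ w₂ ≫ w₃) := by
  obtain ⟨_, m, hm⟩ := h2 w₂ w₃ hw₂ hw₃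
  obtain ⟨_, p, q, hq, ⟨ι⟩⟩ := h3 w₁ m hw₁
  obtain ⟨e, r, hr⟩ := h2 q (m ≫ w₂ ≫ w₃) hq hm
  refine ⟨e, r ≫ p, h5 _ _ hr ⟨?_⟩⟩
  exact α_ r p _ ≪≫ whiskerLeftIso r
    ((α_ p w₁ _).symm ≪≫ whiskerRightIso ι _ ≪≫ α_ q m _)

lemma exists_common_refinement (h2 : W.WB2) (h3 : W.WB3) {x y₁ y₂ : B}
    {n₁ : y₁ ⟶ x} {n₂ : y₂ ⟶ x} (hn₁ : W n₁) (hn₂ : W n₂) :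
    ∃ (e : B) (u : e ⟶ x) (p₁ : e ⟶ y₁) (p₂ : e ⟶ y₂),
      W u ∧ Nonempty (p₁ ≫ n₁ ≅ u) ∧ Nonempty (p₂ ≫ n₂ ≅ u) := by
  obtain ⟨_, h, k, hk, ⟨ι⟩⟩ := h3 n₁ n₂ hn₁
  obtain ⟨e, m, hm⟩ := h2 k n₂ hk hn₂
  exact ⟨e, _, m ≫ h, m ≫ k, hm, ⟨α_ m h n₁ ≪≫ whiskerLeftIso m ι⟩, ⟨α_ m k n₂⟩⟩

lemma exists_isLift_hom_inv (h2 : W.WB2) (h3 : W.WB3) (h4 : W.WB4) {x y z : B}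
    {F G : x ⟶ y} {wm : y ⟶ z} (hwm : W wm) (Θ : F ≫ wm ≅ G ≫ wm) :
    ∃ (e : B) (u : e ⟶ x), W u ∧ ∃ (γ₁ : u ≫ F ⟶ u ≫ G) (γ₂ : u ≫ G ⟶ u ≫ F),
      IsLift F G wm Θ.hom u γ₁ ∧ IsLift G F wm Θ.inv u γ₂ := by
  obtain ⟨_, n₁, hn₁, _, hβ₁⟩ := h4.1 F G wm hwm Θ.hom
  obtain ⟨_, n₂, hn₂, _, hβ₂⟩ := h4.1 G F wm hwm Θ.inv
  obtain ⟨e, u, p₁, p₂, hu, ⟨ψ₁⟩, ⟨ψ₂⟩⟩ := exists_common_refinement h2 h3 hn₁ hn₂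
  exact ⟨e, u, hu, _, _, (hβ₁.whiskerLeft p₁).ofIso ψ₁, (hβ₂.whiskerLeft p₂).ofIso ψ₂⟩

/-- Compare `γ` with the trivial lift along `𝟙` by the second half of [WB4]. -/
lemma exists_whiskerLeft_eq_id (h1 : W.WB1) (h4 : W.WB4) {x y z x' : B} {F : x ⟶ y}
    {wm : y ⟶ z} (hwm : W wm) {u : x' ⟶ x} (hu : W u) {γ : u ≫ F ⟶ u ≫ F}
    (hγ : IsLift F F wm (𝟙 (F ≫ wm)) u γ) :
    ∃ (e : B) (s : e ⟶ x'), W (s ≫ u) ∧ s ◁ γ = 𝟙 (s ≫ u ≫ F) := by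
  obtain ⟨e, s, _, hsu, -, κ, hκ⟩ :=
    h4.2 F F wm hwm (𝟙 _) u γ hu hγ (𝟙 x) (𝟙 _) (h1 x) (isLift_id F wm)
  refine ⟨e, s, hsu, ?_⟩
  have hconj : (α_ s u F).hom ≫ s ◁ γ ≫ (α_ s u F).inv = 𝟙 _ := by
    rw [← cancel_mono (κ.hom ▷ F)]
    simpa using hκ
  simpa using (α_ s u F).inv ≫= hconj =≫ (α_ s u F).hom

/-- Lifts of `Θ.hom` and `Θ.inv` along a common `u ∈ W` compose to lifts of identities, so they
become mutually inverse after two refinements. -/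
lemma exists_comp_iso_of_iso_comp (h1 : W.WB1) (h2 : W.WB2) (h3 : W.WB3) (h4 : W.WB4)
    {x y z : B} {F G : x ⟶ y} {wm : y ⟶ z} (hwm : W wm) (Θ : F ≫ wm ≅ G ≫ wm) :
    ∃ (e : B) (n : e ⟶ x), W n ∧ Nonempty (n ≫ F ≅ n ≫ G) := by
  obtain ⟨_, u, hu, γ₁, γ₂, hγ₁, hγ₂⟩ := exists_isLift_hom_inv h2 h3 h4 hwm Θ
  obtain ⟨_, s, hsu, hs⟩ :=
    exists_whiskerLeft_eq_id h1 h4 hwm hu (Θ.hom_inv_id ▸ hγ₁.comp hγ₂)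
  obtain ⟨e, s', hs'su, hs'⟩ :=
    exists_whiskerLeft_eq_id h1 h4 hwm hsu ((Θ.inv_hom_id ▸ hγ₂.comp hγ₁).whiskerLeft s)
  have hs's : s' ◁ s ◁ (γ₂ ≫ γ₁) = 𝟙 _ := by
    simpa using s' ◁ (α_ s u G).inv ≫= hs' =≫ s' ◁ (α_ s u G).hom
  have hs's' : s' ◁ s ◁ (γ₁ ≫ γ₂) = 𝟙 _ := by rw [hs]; simp
  refine ⟨e, s' ≫ s ≫ u, hs'su, ⟨?_⟩⟩
  refine α_ s' (s ≫ u) F ≪≫ whiskerLeftIso s' (α_ s u F) ≪≫ ?_ ≪≫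
    (α_ s' (s ≫ u) G ≪≫ whiskerLeftIso s' (α_ s u G)).symm
  exact
    { hom := s' ◁ s ◁ γ₁
      inv := s' ◁ s ◁ γ₂
      hom_inv_id := by simpa only [Bicategory.whiskerLeft_comp] using hs's'
      inv_hom_id := by simpa only [Bicategory.whiskerLeft_comp] using hs's }

end WClass

lemma CoFull.comp {a b c : B} {w₁ : a ⟶ b} {w₂ : b ⟶ c} (hw₁ : CoFull w₁) (hw₂ : CoFull w₂) :
    CoFull (w₁ ≫ w₂) := by
  intro _ f g η
  obtain ⟨ξ, hξ⟩ := hw₁ (w₂ ≫ f) (w₂ ≫ g) ((α_ w₁ w₂ f).inv ≫ η ≫ (α_ w₁ w₂ g).hom)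
  obtain ⟨η', hη'⟩ := hw₂ f g ξ
  refine ⟨η', ?_⟩
  rw [comp_whiskerLeft, hη', hξ]
  simp

lemma CoFull.of_iso {a b : B} {w m : a ⟶ b} (hm : CoFull m) (ψ : w ≅ m) : CoFull w := by
  intro _ f g η
  obtain ⟨η', hη'⟩ := hm f g (ψ.inv ▷ f ≫ η ≫ ψ.hom ▷ g)
  refine ⟨η', ?_⟩
  rw [← cancel_mono (ψ.hom ▷ g), whisker_exchange, hη']
  simp

/-- Both equations of `DiagEquiv` have this shape. -/
def PastingEq {e d d' c₁ c₂ b : B} {s : e ⟶ d} {t : e ⟶ d'} {v₁ : d ⟶ c₁} {v₂ : d ⟶ c₂}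
    {v₁' : d' ⟶ c₁} {v₂' : d' ⟶ c₂} {f₁ : c₁ ⟶ b} {f₂ : c₂ ⟶ b}
    (ε₁ : s ≫ v₁ ≅ t ≫ v₁') (ε₂ : s ≫ v₂ ≅ t ≫ v₂')
    (θ : v₁ ≫ f₁ ⟶ v₂ ≫ f₂) (θ' : v₁' ≫ f₁ ⟶ v₂' ≫ f₂) : Prop :=
  ε₁.hom ▷ f₁ ≫ (α_ t v₁' f₁).hom ≫ t ◁ θ' ≫ (α_ t v₂' f₂).inv =
    (α_ s v₁ f₁).hom ≫ s ◁ θ ≫ (α_ s v₂ f₂).inv ≫ ε₂.hom ▷ f₂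

section PastingEq

variable {e d d' c₁ c₂ b : B} {s : e ⟶ d} {t : e ⟶ d'} {v₁ : d ⟶ c₁} {v₂ : d ⟶ c₂}
  {v₁' : d' ⟶ c₁} {v₂' : d' ⟶ c₂} {f₁ : c₁ ⟶ b} {f₂ : c₂ ⟶ b}
  {ε₁ : s ≫ v₁ ≅ t ≫ v₁'} {ε₂ : s ≫ v₂ ≅ t ≫ v₂'}

lemma PastingEq.whiskerLeft {θ : v₁ ≫ f₁ ⟶ v₂ ≫ f₂} {θ' : v₁' ≫ f₁ ⟶ v₂' ≫ f₂}
    (H : PastingEq ε₁ ε₂ θ θ') {e' : B} (N : e' ⟶ e) :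
    PastingEq (α_ N s v₁ ≪≫ whiskerLeftIso N ε₁ ≪≫ (α_ N t v₁').symm)
      (α_ N s v₂ ≪≫ whiskerLeftIso N ε₂ ≪≫ (α_ N t v₂').symm) θ θ' := by
  unfold PastingEq at H ⊢
  have := congrArg (fun φ => (α_ N s v₁).hom ▷ f₁ ≫ (α_ N (s ≫ v₁) f₁).hom ≫ N ◁ φ ≫
    (α_ N (t ≫ v₂') f₂).inv ≫ (α_ N t v₂').inv ▷ f₂) H
  convert this using 1 <;>
  · simp only [Iso.trans_hom, whiskerLeftIso_hom, Iso.symm_hom, Bicategory.whiskerLeft_comp]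
    bicategory

lemma exists_pastingEq_of_coFull (ht : CoFull t) (θ : v₁ ≫ f₁ ⟶ v₂ ≫ f₂) :
    ∃ θ' : v₁' ≫ f₁ ⟶ v₂' ≫ f₂, PastingEq ε₁ ε₂ θ θ' := by
  obtain ⟨θ', hθ'⟩ := ht _ _ ((α_ t v₁' f₁).inv ≫ ε₁.inv ▷ f₁ ≫
    (α_ s v₁ f₁).hom ≫ s ◁ θ ≫ (α_ s v₂ f₂).inv ≫ ε₂.hom ▷ f₂ ≫ (α_ t v₂' f₂).hom)
  refine ⟨θ', ?_⟩
  unfold PastingEq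
  rw [hθ']
  simp

end PastingEq

lemma diagEquiv_of_pastingEq {W : WClass B} {a b c₁ c₂ d d' e e' : B} {u₁ : c₁ ⟶ a}
    {f₁ : c₁ ⟶ b} {u₂ : c₂ ⟶ a} {f₂ : c₂ ⟶ b} {v₁ : d ⟶ c₁} {v₂ : d ⟶ c₂}
    {αc : v₁ ≫ u₁ ≅ v₂ ≫ u₂} {β : v₁ ≫ f₁ ⟶ v₂ ≫ f₂} {v₁' : d' ⟶ c₁} {v₂' : d' ⟶ c₂}
    {αc' : v₁' ≫ u₁ ≅ v₂' ≫ u₂} {β' : v₁' ≫ f₁ ⟶ v₂' ≫ f₂} {s : e ⟶ d} {t : e ⟶ d'}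
    {ε₁ : s ≫ v₁ ≅ t ≫ v₁'} {ε₂ : s ≫ v₂ ≅ t ≫ v₂'}
    (H₁ : PastingEq ε₁ ε₂ αc.hom αc'.hom) (H₂ : PastingEq ε₁ ε₂ β β')
    (N : e' ⟶ e) (hN : W (((N ≫ s) ≫ v₁) ≫ u₁)) :
    DiagEquiv W u₁ f₁ u₂ f₂ v₁ v₂ αc β v₁' v₂' αc' β' :=
  ⟨e', N ≫ s, N ≫ t, hN, _, _, H₁.whiskerLeft N, H₂.whiskerLeft N⟩

lemma PseudoPullbackData.pastingEq_lift {a c₁ c₂ d e : B} {u₁ : c₁ ⟶ a} {u₂ : c₂ ⟶ a}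
    (P : PseudoPullbackData u₁ u₂) {v₁ : d ⟶ c₁} {v₂ : d ⟶ c₂} (αc : v₁ ≫ u₁ ≅ v₂ ≫ u₂)
    (s : e ⟶ d) :
    PastingEq (t := s ≫ P.lift v₁ v₂ αc)
      ((whiskerLeftIso s (P.liftFst v₁ v₂ αc)).symm ≪≫ (α_ s _ P.fst).symm)
      ((whiskerLeftIso s (P.liftSnd v₁ v₂ αc)).symm ≪≫ (α_ s _ P.snd).symm)
      αc.hom P.iso.hom := by
  have hαc : αc.hom = (P.liftFst v₁ v₂ αc).inv ▷ u₁ ≫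
      (α_ (P.lift v₁ v₂ αc) P.fst u₁).hom ≫ P.lift v₁ v₂ αc ◁ P.iso.hom ≫
      (α_ (P.lift v₁ v₂ αc) P.snd u₂).inv ≫ (P.liftSnd v₁ v₂ αc).hom ▷ u₂ := by
    rw [P.lift_w]
    simp
  unfold PastingEq
  rw [hαc]
  simp only [Iso.trans_hom, Iso.symm_hom, whiskerLeftIso_inv, Bicategory.whiskerLeft_comp,
    comp_whiskerRight, Category.assoc]
  rw [associator_inv_naturality_middle_assoc]
  simp only [← comp_whiskerRight, whiskerLeft_hom_inv_assoc]
  bicategory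

end

theorem statement17 {B : Type u} [Bicategory.{w, v} B] (W : WClass B)
    (h1 : W.WB1) (h2 : W.WB2) (h3 : W.WB3) (h4 : W.WB4) (h5 : W.WB5)
    (hcofull : ∀ ⦃x y : B⦄ (f : x ⟶ y), W f → CoFull f)
    (pb : ∀ {x y z : B} (u : x ⟶ z) (vm : y ⟶ z), W u → W vm → PseudoPullbackData u vm)
    (hpbc : ∀ {x y z : B} (u : x ⟶ z) (vm : y ⟶ z) (hu : W u) (hv : W vm),
      W ((pb u vm hu hv).fst ≫ u))
    {a b c₁ c₂ d : B} (u₁ : c₁ ⟶ a) (f₁ : c₁ ⟶ b) (u₂ : c₂ ⟶ a) (f₂ : c₂ ⟶ b)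
    (hu₁ : W u₁) (hu₂ : W u₂)
    (v₁ : d ⟶ c₁) (v₂ : d ⟶ c₂) (hv : W (v₁ ≫ u₁))
    (αc : v₁ ≫ u₁ ≅ v₂ ≫ u₂) (β : v₁ ≫ f₁ ⟶ v₂ ≫ f₂) :
    ∃ δ : (pb u₁ u₂ hu₁ hu₂).fst ≫ f₁ ⟶ (pb u₁ u₂ hu₁ hu₂).snd ≫ f₂,
      DiagEquiv W u₁ f₁ u₂ f₂ v₁ v₂ αc β
        (pb u₁ u₂ hu₁ hu₂).fst (pb u₁ u₂ hu₁ hu₂).snd (pb u₁ u₂ hu₁ hu₂).iso δ := by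
  set P := pb u₁ u₂ hu₁ hu₂
  set t := P.lift v₁ v₂ αc
  have hz : W (P.fst ≫ u₁) := hpbc u₁ u₂ hu₁ hu₂
  obtain ⟨_, h, m, hm, ⟨ι⟩⟩ := h3 (v₁ ≫ u₁) (P.fst ≫ u₁) hv
  obtain ⟨_, n, hn, ⟨θ⟩⟩ := WClass.exists_comp_iso_of_iso_comp h1 h2 h3 h4 hz
    (α_ h t _ ≪≫ whiskerLeftIso h ((α_ t P.fst u₁).symm ≪≫
      whiskerRightIso (P.liftFst v₁ v₂ αc) u₁) ≪≫ ι)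
  have hnht : CoFull ((n ≫ h) ≫ t) :=
    ((hcofull n hn).comp (hcofull m hm)).of_iso (α_ n h t ≪≫ θ)
  obtain ⟨δ, hδ⟩ := exists_pastingEq_of_coFull hnht β
  obtain ⟨_, N, hN⟩ := WClass.exists_comp_comp_comp_mem h2 h3 h5 hn hm hz
  refine ⟨δ, diagEquiv_of_pastingEq (P.pastingEq_lift αc (n ≫ h)) hδ N (h5 _ _ hN ⟨?_⟩)⟩
  exact α_ _ v₁ u₁ ≪≫ α_ N (n ≫ h) _ ≪≫
    whiskerLeftIso N (α_ n h _ ≪≫ whiskerLeftIso n ι)
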